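/- If a_i, b ∈ ℝ with 0 ≤ a_i and l_i ≥ 1 - 1/(1 + s) whenever s = sum_j d_{ij} a_j and a_j ≤ l_j for all j, then the sequence defined by a^{(0)} = δ > 0 and a^{(n+1)}_i = 1 - 1/(1 + sum_j d_{ij} a^{(n)}_j) is monotone nondecreasing and bounded above by 1, hence converges to a fixed point a* of the iteration with a*_i ≥ δ_i; if additionally the escape probabilities E_i satisfy the same fixed point equation and the fixed point in (0,1]^m is unique, then a*_i = E_i. -/

import Mathlib

/-!
The map `Φ` is monotone on nonnegative vectors and takes values in `[0, 1)`, so starting from a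
subsolution `δ ≤ Φ δ` the iterates increase and stay below `1`. In the product order on `ℝᵐ` a
bounded monotone sequence converges to its supremum, and continuity of `Φ` there makes the limit a
fixed point in `(0, 1]ᵐ`; uniqueness of such fixed points identifies it with `E`.
-/

open Function Set

theorem MonotoneOn.monotone_iterate_of_le_map {α : Type*} [Preorder α] {f : α → α} {s : Set α}
    (hf : MonotoneOn f s) (hs : MapsTo f s s) {x : α} (hx : x ∈ s) (hxf : x ≤ f x) :
    Monotone fun n => f^[n] x := by
  refine monotone_nat_of_le_succ fun n => ?_
  induction n with
  | zero => exact hxf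
  | succ n ih =>
    rw [iterate_succ_apply' f n, iterate_succ_apply' f (n + 1)]
    exact hf (hs.iterate n hx) (hs.iterate (n + 1) hx) ih

namespace EscapeProbability

variable {ι : Type*} [Fintype ι] (d : ι → ι → ℕ)

noncomputable def escapeMap (a : ι → ℝ) : ι → ℝ := fun i => 1 - 1 / (1 + ∑ j, (d i j : ℝ) * a j)

variable {d}

lemma weightedSum_nonneg {a : ι → ℝ} (ha : 0 ≤ a) (i : ι) : 0 ≤ ∑ j, (d i j : ℝ) * a j :=
  Finset.sum_nonneg fun j _ => mul_nonneg (Nat.cast_nonneg _) (ha j)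

lemma escapeMap_nonneg {a : ι → ℝ} (ha : 0 ≤ a) : 0 ≤ escapeMap d a := fun i => by
  have h := weightedSum_nonneg (d := d) ha i
  rw [Pi.zero_apply, escapeMap, sub_nonneg, div_le_one (by linarith)]
  linarith

lemma escapeMap_lt_one {a : ι → ℝ} (ha : 0 ≤ a) (i : ι) : escapeMap d a i < 1 := by
  have := weightedSum_nonneg (d := d) ha i
  have : 0 < 1 / (1 + ∑ j, (d i j : ℝ) * a j) := by positivity
  simp only [escapeMap]
  linarith

lemma escapeMap_monotoneOn : MonotoneOn (escapeMap d) (Ici 0) := by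
  intro a ha b _ hab i
  have hsum : ∑ j, (d i j : ℝ) * a j ≤ ∑ j, (d i j : ℝ) * b j :=
    Finset.sum_le_sum fun j _ => mul_le_mul_of_nonneg_left (hab j) (Nat.cast_nonneg _)
  have := weightedSum_nonneg (d := d) ha i
  have := one_div_le_one_div_of_le (by linarith) (add_le_add_right hsum 1)
  simp only [escapeMap]
  linarith

lemma continuousAt_escapeMap {a : ι → ℝ} (ha : 0 ≤ a) : ContinuousAt (escapeMap d) a := by
  refine continuousAt_pi.2 fun i => ?_
  have hsum : Continuous fun b : ι → ℝ => ∑ j, (d i j : ℝ) * b j :=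
    continuous_finsetSum _ fun j _ => (continuous_apply j).const_mul _
  have hpos := weightedSum_nonneg (d := d) ha i
  exact continuousAt_const.sub
    (continuousAt_const.div (continuousAt_const.add hsum.continuousAt) (by linarith))

end EscapeProbability

open EscapeProbability

theorem stmt_17_general (m : ℕ) (dmat : Fin m → Fin m → ℕ)
    (Φ : (Fin m → ℝ) → (Fin m → ℝ))
    (hΦ : ∀ a i, Φ a i = 1 - 1 / (1 + ∑ j, (dmat i j : ℝ) * a j))
    (δ E : Fin m → ℝ) (hδ : ∀ i, 0 < δ i)
    (hstart : ∀ i, δ i ≤ Φ δ i)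
    (hE : (∀ i, 0 < E i ∧ E i ≤ 1) ∧ Φ E = E) :
    (∀ n i, Φ^[n] δ i ≤ Φ^[n + 1] δ i) ∧
    (∀ n i, Φ^[n] δ i ≤ 1) ∧
    ∃ a : Fin m → ℝ,
      Filter.Tendsto (fun n => Φ^[n] δ) Filter.atTop (nhds a) ∧
      Φ a = a ∧ (∀ i, δ i ≤ a i) ∧
      ((∃! x : Fin m → ℝ, (∀ i, 0 < x i ∧ x i ≤ 1) ∧ Φ x = x) → a = E) := by
  obtain rfl : Φ = escapeMap dmat := funext fun a => funext (hΦ a)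
  have hδ₀ : δ ∈ Ici 0 := fun i => (hδ i).le
  have hnonneg (n : ℕ) : 0 ≤ (escapeMap dmat)^[n] δ :=
    MapsTo.iterate (fun _ => escapeMap_nonneg) n hδ₀
  have hmono : Monotone fun n => (escapeMap dmat)^[n] δ :=
    escapeMap_monotoneOn.monotone_iterate_of_le_map (fun _ => escapeMap_nonneg) hδ₀ hstart
  have hle_one (n : ℕ) : (escapeMap dmat)^[n] δ ≤ 1 := fun i =>
    (hmono n.le_succ i).trans <| by
      simpa only [iterate_succ_apply', Pi.one_apply] using (escapeMap_lt_one (hnonneg n) i).le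
  have hlim := tendsto_atTop_ciSup hmono ⟨1, forall_mem_range.2 hle_one⟩
  set a := ⨆ n, (escapeMap dmat)^[n] δ
  have hδa : δ ≤ a := hmono.ge_of_tendsto hlim 0
  have hfix : escapeMap dmat a = a :=
    isFixedPt_of_tendsto_iterate hlim (continuousAt_escapeMap (hδ₀.trans hδa))
  refine ⟨fun n => hmono n.le_succ, hle_one, a, hlim, hfix, hδa, ?_⟩
  rintro ⟨x, -, hx⟩
  have ha_mem i : 0 < a i ∧ a i ≤ 1 := ⟨(hδ i).trans_le (hδa i), le_of_tendsto' hlim hle_one i⟩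
  rw [hx a ⟨ha_mem, hfix⟩, hx E hE]

/-- Consider the monotone map `Φ(a)_i = 1 - 1/(1 + ∑_j d_{ij} a_j)` and
the sequence `a⁽⁰⁾ = δ > 0`, `a⁽ⁿ⁺¹⁾ = Φ(a⁽ⁿ⁾)` (with `δ ≤ Φ(δ)`, `δ ≤ E`). Then the
sequence is monotone nondecreasing and bounded above by `1`, hence converges to a
fixed point `a*` of the iteration with `a*_i ≥ δ_i`; if moreover the escape
probabilities `E_i` satisfy the same fixed point equation and the fixed point in
`(0,1]^m` is unique, then `a* = E`. -/
theorem stmt_17 (m : ℕ) (dmat : Fin m → Fin m → ℕ)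
    (hd : ∀ i, 1 ≤ ∑ j, dmat i j)
    (Φ : (Fin m → ℝ) → (Fin m → ℝ))
    (hΦ : ∀ a i, Φ a i = 1 - 1 / (1 + ∑ j, (dmat i j : ℝ) * a j))
    (δ E : Fin m → ℝ) (hδ : ∀ i, 0 < δ i) (hδE : ∀ i, δ i ≤ E i)
    (hstart : ∀ i, δ i ≤ Φ δ i)
    (hE : (∀ i, 0 < E i ∧ E i ≤ 1) ∧ Φ E = E) :
    (∀ n i, Φ^[n] δ i ≤ Φ^[n + 1] δ i) ∧
    (∀ n i, Φ^[n] δ i ≤ 1) ∧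
    ∃ a : Fin m → ℝ,
      Filter.Tendsto (fun n => Φ^[n] δ) Filter.atTop (nhds a) ∧
      Φ a = a ∧ (∀ i, δ i ≤ a i) ∧
      ((∃! x : Fin m → ℝ, (∀ i, 0 < x i ∧ x i ≤ 1) ∧ Φ x = x) → a = E) :=
  stmt_17_general m dmat Φ hΦ δ E hδ hstart hE
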